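/- For the torus C_m □ C_n with m, n ≥ 4 both odd and k = 2, fμ²(C_m □ C_n) = 2. -/

import Mathlib

open SimpleGraph

variable {V : Type*}

/-- `X` is a `k`-fault-tolerant mutual-visibility set of `G`: for any two distinct
non-adjacent vertices `u v ∈ X` there are `k+1` internally disjoint shortest
`u,v`-paths whose only vertices in `X` are `u` and `v`. -/
def IsFtmvSet (G : SimpleGraph V) (k : ℕ) (X : Set V) : Prop :=
  ∀ u ∈ X, ∀ v ∈ X, u ≠ v → ¬ G.Adj u v →
    ∃ P : Fin (k + 1) → G.Path u v,
      (∀ i, (P i).1.length = G.dist u v) ∧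
      (∀ i, ∀ w ∈ (P i).1.support, w ∈ X → w = u ∨ w = v) ∧
      (∀ i j, i ≠ j → ∀ w, w ∈ (P i).1.support → w ∈ (P j).1.support → w = u ∨ w = v)

/-- The `k`-fault-tolerant mutual-visibility number: maximum cardinality of a `k`-ftmv set. -/
noncomputable def ftmvNum (G : SimpleGraph V) (k : ℕ) : ℕ :=
  sSup {n | ∃ X : Set V, IsFtmvSet G k X ∧ X.ncard = n}

/-- The clique number of `G`. -/
noncomputable def cliqueNum' (G : SimpleGraph V) : ℕ :=
  sSup {n | ∃ s : Finset V, G.IsNClique n s}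

/-
If `u, v ∈ X` are distinct and non-adjacent, the second vertices of the `k + 1` internally
disjoint shortest `u,v`-paths are `k + 1` distinct neighbours of `u` that are closer to `v`.
In `C_m □ C_n` a neighbour of `u` is closer to `v` exactly when it is closer in the cycle
coordinate it moves in, and on an odd cycle at most one of the two neighbours of a vertex is
closer to any given vertex. So `u` has at most two such neighbours, and a 2-ftmv set is a
clique. For `m, n ≥ 4` the torus is triangle-free, so such a clique has at most two vertices,
while any edge is (vacuously) a 2-ftmv set.
-/

open Fin.CommRing in
lemma Fin.val_sub_eq_ite {n : ℕ} [NeZero n] (x y z : Fin n) : (z - x).val =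
    if n ≤ (z - y).val + (y - x).val then (z - y).val + (y - x).val - n
    else (z - y).val + (y - x).val := by
  rw [← Fin.val_add_eq_ite, sub_add_sub_cancel]

namespace SimpleGraph

section General

variable {G : SimpleGraph V}

lemma Walk.apply_le_apply_add_length {f : V → ℕ} (hf : ∀ x y, G.Adj x y → f x ≤ f y + 1)
    {u v : V} (p : G.Walk u v) : f u ≤ f v + p.length := by
  induction p with
  | nil => simp
  | cons h _ ih => have := hf _ _ h; rw [Walk.length_cons]; omega

lemma Reachable.apply_le_apply_add_dist {f : V → ℕ}
    (hf : ∀ x y, G.Adj x y → f x ≤ f y + 1) {u v : V} (h : G.Reachable u v) : f u ≤ f v + G.dist u v := by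
  obtain ⟨p, hp⟩ := h.exists_walk_length_eq_dist
  exact hp ▸ p.apply_le_apply_add_length hf

def closerNeighborSet (G : SimpleGraph V) (u v : V) : Set V :=
  {w | G.Adj u w ∧ G.dist w v < G.dist u v}

lemma Walk.snd_mem_closerNeighborSet {u v : V} {p : G.Walk u v} (hp : p.length = G.dist u v)
    (huv : u ≠ v) : p.snd ∈ G.closerNeighborSet u v := by
  have hnil : ¬p.Nil := Walk.not_nil_of_ne huv
  refine ⟨Walk.adj_snd hnil, ?_⟩
  have := dist_le p.tail
  have := p.length_tail_add_one hnil
  omega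

lemma IsClique.ncard_lt_of_cliqueFree {s : Set V} {n : ℕ} (hs : G.IsClique s)
    (h : G.CliqueFree n) : s.ncard < n := by
  by_contra! hn
  have hfin : s.Finite := Set.finite_of_ncard_pos
    (lt_of_lt_of_le (Nat.pos_of_ne_zero fun h0 => not_cliqueFree_zero (h0 ▸ h)) hn)
  obtain ⟨t, hts, htn⟩ := Finset.exists_subset_card_eq (s := hfin.toFinset) (n := n)
    (by rwa [← Set.ncard_eq_toFinset_card s hfin])
  exact h t ⟨hs.subset (by simpa using hts), htn⟩

end General

section BoxProd

variable {α β : Type*} {G : SimpleGraph α} {H : SimpleGraph β}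

lemma dist_boxProd (hG : G.Preconnected) (hH : H.Preconnected) (x y : α × β) :
    (G □ H).dist x y = G.dist x.1 y.1 + H.dist x.2 y.2 := by
  rw [dist, edist_boxProd, ENat.toNat_add (edist_ne_top_iff_reachable.mpr (hG _ _))
    (edist_ne_top_iff_reachable.mpr (hH _ _)), dist, dist]

lemma closerNeighborSet_boxProd_subset (hG : G.Preconnected) (hH : H.Preconnected)
    (u v : α × β) : (G □ H).closerNeighborSet u v ⊆
      (fun a => (a, u.2)) '' G.closerNeighborSet u.1 v.1 ∪
        (fun b => (u.1, b)) '' H.closerNeighborSet u.2 v.2 := by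
  rintro ⟨a, b⟩ ⟨hadj, hcloser⟩
  rw [dist_boxProd hG hH, dist_boxProd hG hH] at hcloser
  rcases boxProd_adj.mp hadj with ⟨hGadj, rfl⟩ | ⟨hHadj, rfl⟩ <;> dsimp only at hcloser
  · exact Or.inl ⟨a, ⟨hGadj, by omega⟩, rfl⟩
  · exact Or.inr ⟨b, ⟨hHadj, by omega⟩, rfl⟩

lemma ncard_closerNeighborSet_boxProd_le [Finite α] [Finite β] (hG : G.Preconnected)
    (hH : H.Preconnected) (u v : α × β) : ((G □ H).closerNeighborSet u v).ncard ≤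
      (G.closerNeighborSet u.1 v.1).ncard + (H.closerNeighborSet u.2 v.2).ncard :=
  (Set.ncard_le_ncard (closerNeighborSet_boxProd_subset hG hH u v)).trans <|
    (Set.ncard_union_le _ _).trans (add_le_add (Set.ncard_image_le) (Set.ncard_image_le))

lemma cliqueFree_three_boxProd (hG : G.CliqueFree 3) (hH : H.CliqueFree 3) :
    (G □ H).CliqueFree 3 := by
  classical
  intro s hs
  obtain ⟨x, y, z, hxy, hxz, hyz, rfl⟩ := is3Clique_iff.mp hs
  rcases boxProd_adj.mp hxy with ⟨hxy, exy⟩ | ⟨hxy, exy⟩ <;>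
    rcases boxProd_adj.mp hxz with ⟨hxz, exz⟩ | ⟨hxz, exz⟩ <;>
    rcases boxProd_adj.mp hyz with ⟨hyz, eyz⟩ | ⟨hyz, eyz⟩
  all_goals first
    | exact hG _ (is3Clique_triple_iff.mpr ⟨hxy, hxz, hyz⟩)
    | exact hH _ (is3Clique_triple_iff.mpr ⟨hxy, hxz, hyz⟩)
    | simp_all

end BoxProd

section Cycle

open Fin.CommRing

variable {n : ℕ}

lemma cycleGraph_dist (a b : Fin (n + 2)) :
    (cycleGraph (n + 2)).dist a b = min (b - a).val (n + 2 - (b - a).val) := by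
  apply le_antisymm
  · have hwalk (a : Fin (n + 2)) (k : ℕ) : (cycleGraph (n + 2)).dist a (a + k) ≤ k := by
      induction k with
      | zero => simp
      | succ k ih =>
        have hadj : (cycleGraph (n + 2)).Adj (a + k) (a + (k + 1 : ℕ)) := by
          rw [cycleGraph_adj]; right; push_cast; ring
        have hconn : (cycleGraph (n + 2)).Connected := cycleGraph_connected
        have := hconn.dist_triangle (u := a) (v := a + k) (w := a + (k + 1 : ℕ))
        have := dist_eq_one_iff_adj.mpr hadj
        omega
    have hab : (cycleGraph (n + 2)).dist a b ≤ (b - a).val := by simpa using hwalk a (b - a).val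
    have hba : (cycleGraph (n + 2)).dist a b ≤ (a - b).val := by
      simpa [dist_comm] using hwalk b (a - b).val
    have hsum := Fin.val_sub_eq_ite a b a
    rw [sub_self, Fin.val_zero] at hsum
    split_ifs at hsum <;> omega
  · -- the formula changes by at most one along an edge and vanishes at `b`
    have hf (x y : Fin (n + 2)) (hxy : (cycleGraph (n + 2)).Adj x y) :
        min (b - x).val (n + 2 - (b - x).val) ≤ min (b - y).val (n + 2 - (b - y).val) + 1 := by
      rcases cycleGraph_adj.mp hxy with h | h
      · have := Fin.val_sub_eq_ite y x b
        rw [h, Fin.val_one] at this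
        split_ifs at this <;> omega
      · have := Fin.val_sub_eq_ite x y b
        rw [h, Fin.val_one] at this
        split_ifs at this <;> omega
    simpa using (cycleGraph_preconnected a b).apply_le_apply_add_dist hf

lemma closerNeighborSet_cycleGraph_subsingleton (hn : Odd (n + 2)) (a c : Fin (n + 2)) :
    ((cycleGraph (n + 2)).closerNeighborSet a c).Subsingleton := by
  rintro w₁ ⟨h₁, hc₁⟩ w₂ ⟨h₂, hc₂⟩
  by_contra hne
  have hval : (w₁ - a).val ≠ (w₂ - a).val := fun h => hne (sub_left_inj.mp (Fin.ext h))
  rw [← dist_eq_one_iff_adj, cycleGraph_dist] at h₁ h₂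
  rw [cycleGraph_dist, cycleGraph_dist] at hc₁ hc₂
  have e₁ := Fin.val_sub_eq_ite a w₁ c
  have e₂ := Fin.val_sub_eq_ite a w₂ c
  obtain ⟨k, hk⟩ := hn
  split_ifs at e₁ e₂ <;> omega

lemma cycleGraph_cliqueFree_three (hn : 2 ≤ n) : (cycleGraph (n + 2)).CliqueFree 3 := by
  intro s hs
  obtain ⟨x, y, z, hxy, hxz, hyz, rfl⟩ := is3Clique_iff.mp hs
  rw [← dist_eq_one_iff_adj, cycleGraph_dist] at hxy hxz hyz
  have := Fin.val_sub_eq_ite x y z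
  split_ifs at this <;> omega

lemma ncard_closerNeighborSet_torus_le_two {m : ℕ} (hm : Odd (m + 2)) (hn : Odd (n + 2))
    (u v : Fin (m + 2) × Fin (n + 2)) :
    ((cycleGraph (m + 2) □ cycleGraph (n + 2)).closerNeighborSet u v).ncard ≤ 2 := by
  have h₁ := Set.ncard_le_one_iff_subsingleton.mpr
    (closerNeighborSet_cycleGraph_subsingleton hm u.1 v.1)
  have h₂ := Set.ncard_le_one_iff_subsingleton.mpr
    (closerNeighborSet_cycleGraph_subsingleton hn u.2 v.2)
  have := ncard_closerNeighborSet_boxProd_le cycleGraph_preconnected cycleGraph_preconnected u v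
  omega

end Cycle

end SimpleGraph

lemma isFtmvSet_pair_of_adj {G : SimpleGraph V} {a b : V} (k : ℕ) (h : G.Adj a b) :
    IsFtmvSet G k {a, b} := by
  rintro u (rfl | rfl) v (rfl | rfl) huv hadj <;>
    first | exact absurd rfl huv | simp_all [G.adj_comm]

lemma IsFtmvSet.isClique [Finite V] {G : SimpleGraph V} {k : ℕ} {X : Set V}
    (hX : IsFtmvSet G k X) (hG : ∀ u v, (G.closerNeighborSet u v).ncard ≤ k) :
    G.IsClique X := by
  intro u hu v hv huv
  by_contra hadj
  obtain ⟨P, hlen, -, hdisj⟩ := hX u hu v hv huv hadj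
  have hmem i : (P i).1.snd ∈ G.closerNeighborSet u v :=
    Walk.snd_mem_closerNeighborSet (hlen i) huv
  have hinj : Function.Injective fun i => (P i).1.snd := by
    intro i j (hij : (P i).1.getVert 1 = (P j).1.getVert 1)
    by_contra hne
    rcases hdisj i j hne _ ((P i).1.getVert_mem_support 1) (hij ▸ (P j).1.getVert_mem_support 1)
      with h | h
    · exact (hmem i).1.ne h.symm
    · exact hadj (h ▸ (hmem i).1)
  have := Set.ncard_le_ncard (Set.range_subset_iff.mpr hmem)
  rw [Set.ncard_range_of_injective hinj, Nat.card_fin] at this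
  have := hG u v
  omega

theorem stmt19 (m n : ℕ) (hm : 4 ≤ m) (hn : 4 ≤ n) (hmo : Odd m) (hno : Odd n) :
    ftmvNum (cycleGraph m □ cycleGraph n) 2 = 2 := by
  obtain ⟨m, rfl⟩ : ∃ k, m = k + 2 := ⟨m - 2, by omega⟩
  obtain ⟨n, rfl⟩ : ∃ k, n = k + 2 := ⟨n - 2, by omega⟩
  have hfree : (cycleGraph (m + 2) □ cycleGraph (n + 2)).CliqueFree 3 :=
    cliqueFree_three_boxProd (cycleGraph_cliqueFree_three (by omega))
      (cycleGraph_cliqueFree_three (by omega))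
  have hadj : (cycleGraph (m + 2) □ cycleGraph (n + 2)).Adj (0, 0) (0, 1) :=
    boxProd_adj.mpr (Or.inr ⟨cycleGraph_adj.mpr (Or.inr (sub_zero 1)), rfl⟩)
  refine IsGreatest.csSup_eq ⟨⟨_, isFtmvSet_pair_of_adj 2 hadj, Set.ncard_pair hadj.ne⟩, ?_⟩
  rintro _ ⟨X, hX, rfl⟩
  exact Nat.le_of_lt_succ <|
    (hX.isClique (ncard_closerNeighborSet_torus_le_two hmo hno)).ncard_lt_of_cliqueFree hfree
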